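/- arXiv:2203.12023 — 2 statements merged into one kernel-verified Lean document; each statement's English description precedes it below -/
import Mathlib

section
/- Let 𝒟 and 𝒟̂ be probability measures on 𝒳 × 𝒴 admitting densities of product-conditional form p(x, y) = p₁(x)p₂(y|x) and q(x, y) = q₁(x)q₂(y|x) with respect to a σ-finite product measure μ ⊗ ν. Let ℱ be a family of classifiers and ℓ a loss function with 0 ≤ ℓ(f, z) ≤ B_ℓ for all f ∈ ℱ and all z, measurable in z for each f, and let R̂_{𝒟̂}(f) be any empirical risk functional. Suppose: (i) sup_{f ∈ ℱ} |R̂_{𝒟̂}(f) − R_{𝒟̂}(f)| ≤ A for some real A ≥ 0; (ii) d_TV(𝒟̂_X, 𝒟_X) ≤ ε₁ for the feature marginals; (iii) d_TV(q₂(·|x), p₂(·|x)) ≤ ε₂ for every x ∈ 𝒳, with ε₁, ε₂ ∈ [0, 1]. Then sup_{f ∈ ℱ} |R̂_{𝒟̂}(f) − R_𝒟(f)| ≤ A + B_ℓ (√(2ε₁) + √(2ε₂)). -/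
open MeasureTheory

/-- Total variation distance between two measures:
`d_TV(P, Q) = sup_{A measurable} |P(A) - Q(A)|`. -/
noncomputable def tvDist {X : Type*} [MeasurableSpace X] (P Q : Measure X) : ℝ :=
  ⨆ A : {A : Set X // MeasurableSet A}, |(P A.1).toReal - (Q A.1).toReal|

/-!
Disintegrate both risks along the feature: with the conditional risk
`G_r(x) = ∫ ℓ(x, y) r(x, y) dν(y) ∈ [0, B]`,
`R_𝒟hat(f) - R_𝒟(f) = ∫ G_q (q₁ - p₁) dμ + ∫ (G_q - G_p) p₁ dμ`.
Integrating a `[0, B]`-valued function against two densities changes the result by at most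
`B · d_TV` (split on the set where one density exceeds the other), so the first term is at most
`B ε₁`, and averaging the pointwise bound `|G_q - G_p| ≤ B ε₂` against `p₁` bounds the second by
`B ε₂`. Finally `ε ≤ √(2ε)` on `[0, 1]`.
-/

open Set

section TotalVariation

variable {X : Type*} [MeasurableSpace X]

lemma tvDist_comm (P Q : Measure X) : tvDist P Q = tvDist Q P := by
  simp only [tvDist, abs_sub_comm]

lemma sub_le_tvDist (P Q : Measure X) [IsFiniteMeasure P] [IsFiniteMeasure Q] {s : Set X}
    (hs : MeasurableSet s) : (P s).toReal - (Q s).toReal ≤ tvDist P Q := by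
  have hbdd : BddAbove (range fun A : {A : Set X // MeasurableSet A} =>
      |(P A.1).toReal - (Q A.1).toReal|) := by
    refine ⟨(P univ).toReal + (Q univ).toReal, ?_⟩
    rintro _ ⟨A, rfl⟩
    have hPA : (P A.1).toReal ≤ (P univ).toReal :=
      ENNReal.toReal_mono (measure_ne_top P _) (measure_mono (subset_univ _))
    have hQA : (Q A.1).toReal ≤ (Q univ).toReal :=
      ENNReal.toReal_mono (measure_ne_top Q _) (measure_mono (subset_univ _))
    have := ENNReal.toReal_nonneg (a := P A.1)
    have := ENNReal.toReal_nonneg (a := Q A.1)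
    exact abs_sub_le_iff.2 ⟨by linarith, by linarith⟩
  exact (le_abs_self _).trans (le_ciSup hbdd ⟨s, hs⟩)

variable {μ : Measure X}

lemma toReal_withDensity_ofReal_apply {r : X → ℝ} (hr : Measurable r) (hr0 : ∀ x, 0 ≤ r x)
    {s : Set X} (hs : MeasurableSet s) :
    ((μ.withDensity fun x => ENNReal.ofReal (r x)) s).toReal = ∫ x in s, r x ∂μ := by
  rw [integral_eq_lintegral_of_nonneg_ae (ae_of_all _ hr0) hr.aestronglyMeasurable.restrict,
    withDensity_apply _ hs]

lemma integral_withDensity_ofReal {r : X → ℝ} (hr : Measurable r) (hr0 : ∀ x, 0 ≤ r x)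
    (g : X → ℝ) :
    ∫ x, g x ∂μ.withDensity (fun x => ENNReal.ofReal (r x)) = ∫ x, g x * r x ∂μ := by
  rw [integral_withDensity_eq_integral_toReal_smul hr.ennreal_ofReal
    (ae_of_all _ fun _ => ENNReal.ofReal_lt_top)]
  congr 1 with x
  rw [ENNReal.toReal_ofReal (hr0 x), smul_eq_mul, mul_comm]

lemma MeasureTheory.Integrable.mul_of_mem_Icc {p g : X → ℝ} {B : ℝ} (hp : Integrable p μ)
    (hg : AEStronglyMeasurable g μ) (hgB : ∀ x, g x ∈ Icc 0 B) :
    Integrable (fun x => g x * p x) μ :=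
  hp.bdd_mul hg (c := B) <| ae_of_all _ fun x => by
    rw [Real.norm_of_nonneg (hgB x).1]; exact (hgB x).2

variable {p q g : X → ℝ} {B : ℝ}

lemma integral_mul_sub_integral_mul_le_mul_tvDist (hp : Measurable p) (hq : Measurable q)
    (hp0 : ∀ x, 0 ≤ p x) (hq0 : ∀ x, 0 ≤ q x) (hpi : Integrable p μ) (hqi : Integrable q μ)
    (hg : Measurable g) (hB : 0 ≤ B) (hgB : ∀ x, g x ∈ Icc 0 B) :
    ∫ x, g x * q x ∂μ - ∫ x, g x * p x ∂μ ≤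
      B * tvDist (μ.withDensity fun x => ENNReal.ofReal (q x))
        (μ.withDensity fun x => ENNReal.ofReal (p x)) := by
  have := isFiniteMeasure_withDensity_ofReal hpi.2
  have := isFiniteMeasure_withDensity_ofReal hqi.2
  have hgq := hqi.mul_of_mem_Icc hg.aestronglyMeasurable hgB
  have hgp := hpi.mul_of_mem_Icc hg.aestronglyMeasurable hgB
  set S := {x | p x < q x}
  have hS : MeasurableSet S := measurableSet_lt hp hq
  calc ∫ x, g x * q x ∂μ - ∫ x, g x * p x ∂μ
      = ∫ x in S, (g x * q x - g x * p x) ∂μ + ∫ x in Sᶜ, (g x * q x - g x * p x) ∂μ := by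
        rw [← integral_sub hgq hgp]; exact (integral_add_compl hS (hgq.sub hgp)).symm
    _ ≤ ∫ x in S, B * (q x - p x) ∂μ + 0 := by
        refine add_le_add ?_ ?_
        · refine setIntegral_mono_on (hgq.sub hgp).integrableOn
            ((hqi.sub hpi).const_mul B).integrableOn hS fun x hx => ?_
          have : p x ≤ q x := le_of_lt hx
          nlinarith [(hgB x).1, (hgB x).2]
        · refine setIntegral_nonpos hS.compl fun x hx => ?_
          have : q x ≤ p x := not_lt.1 hx
          nlinarith [(hgB x).1]
    _ = B * (((μ.withDensity fun x => ENNReal.ofReal (q x)) S).toReal -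
          ((μ.withDensity fun x => ENNReal.ofReal (p x)) S).toReal) := by
        rw [add_zero, integral_const_mul, integral_sub hqi.integrableOn hpi.integrableOn,
          toReal_withDensity_ofReal_apply hq hq0 hS, toReal_withDensity_ofReal_apply hp hp0 hS]
    _ ≤ _ := mul_le_mul_of_nonneg_left (sub_le_tvDist _ _ hS) hB

lemma abs_integral_mul_sub_integral_mul_le_mul_tvDist (hp : Measurable p) (hq : Measurable q)
    (hp0 : ∀ x, 0 ≤ p x) (hq0 : ∀ x, 0 ≤ q x) (hpi : Integrable p μ) (hqi : Integrable q μ)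
    (hg : Measurable g) (hB : 0 ≤ B) (hgB : ∀ x, g x ∈ Icc 0 B) :
    |∫ x, g x * q x ∂μ - ∫ x, g x * p x ∂μ| ≤
      B * tvDist (μ.withDensity fun x => ENNReal.ofReal (q x))
        (μ.withDensity fun x => ENNReal.ofReal (p x)) := by
  refine abs_sub_le_iff.2 ⟨?_, ?_⟩
  · exact integral_mul_sub_integral_mul_le_mul_tvDist hp hq hp0 hq0 hpi hqi hg hB hgB
  · rw [tvDist_comm]
    exact integral_mul_sub_integral_mul_le_mul_tvDist hq hp hq0 hp0 hqi hpi hg hB hgB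

lemma abs_integral_mul_sub_integral_mul_le {h : X → ℝ} {c : ℝ}
    (hgp : Integrable (fun x => g x * p x) μ) (hhp : Integrable (fun x => h x * p x) μ)
    (hp0 : ∀ x, 0 ≤ p x) (hpi : Integrable p μ) (hp1 : ∫ x, p x ∂μ = 1)
    (hgh : ∀ x, |g x - h x| ≤ c) :
    |∫ x, g x * p x ∂μ - ∫ x, h x * p x ∂μ| ≤ c := by
  rw [← integral_sub hgp hhp]
  calc |∫ x, (g x * p x - h x * p x) ∂μ| ≤ ∫ x, c * p x ∂μ := by
        rw [← Real.norm_eq_abs]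
        refine norm_integral_le_of_norm_le (hpi.const_mul c) (ae_of_all _ fun x => ?_)
        rw [Real.norm_eq_abs, ← sub_mul, abs_mul, abs_of_nonneg (hp0 x)]
        exact mul_le_mul_of_nonneg_right (hgh x) (hp0 x)
    _ = c := by rw [integral_const_mul, hp1, mul_one]

end TotalVariation

section ConditionalRisk

variable {X Y : Type*} [MeasurableSpace X] [MeasurableSpace Y] {μ : Measure X} {ν : Measure Y}

noncomputable def condRisk (ν : Measure Y) (r : X → Y → ℝ) (g : X × Y → ℝ) (x : X) : ℝ :=
  ∫ y, g (x, y) * r x y ∂ν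

variable {r p q : X → Y → ℝ} {g : X × Y → ℝ} {B : ℝ}

lemma measurable_condRisk [SFinite ν] (hr : Measurable (Function.uncurry r))
    (hg : Measurable g) : Measurable (condRisk ν r g) :=
  (hg.mul hr).stronglyMeasurable.integral_prod_right'.measurable

lemma condRisk_mem_Icc (hr0 : ∀ x y, 0 ≤ r x y) (hri : ∀ x, Integrable (r x) ν)
    (hr1 : ∀ x, ∫ y, r x y ∂ν = 1) (hg : Measurable g) (hgB : ∀ z, g z ∈ Icc 0 B) (x : X) :
    condRisk ν r g x ∈ Icc 0 B := by
  refine ⟨integral_nonneg fun y => mul_nonneg (hgB _).1 (hr0 x y), ?_⟩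
  calc condRisk ν r g x ≤ ∫ y, B * r x y ∂ν :=
        integral_mono ((hri x).mul_of_mem_Icc (hg.comp measurable_prodMk_left).aestronglyMeasurable
          fun y => hgB (x, y)) ((hri x).const_mul B)
          fun y => mul_le_mul_of_nonneg_right (hgB _).2 (hr0 x y)
    _ = B := by rw [integral_const_mul, hr1 x, mul_one]

lemma abs_condRisk_sub_condRisk_le_mul_tvDist (hp : Measurable (Function.uncurry p))
    (hq : Measurable (Function.uncurry q)) (hp0 : ∀ x y, 0 ≤ p x y) (hq0 : ∀ x y, 0 ≤ q x y)
    (hpi : ∀ x, Integrable (p x) ν) (hqi : ∀ x, Integrable (q x) ν) (hg : Measurable g)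
    (hB : 0 ≤ B) (hgB : ∀ z, g z ∈ Icc 0 B) (x : X) :
    |condRisk ν q g x - condRisk ν p g x| ≤
      B * tvDist (ν.withDensity fun y => ENNReal.ofReal (q x y))
        (ν.withDensity fun y => ENNReal.ofReal (p x y)) :=
  abs_integral_mul_sub_integral_mul_le_mul_tvDist (hp.comp measurable_prodMk_left)
    (hq.comp measurable_prodMk_left) (hp0 x) (hq0 x) (hpi x) (hqi x)
    (hg.comp measurable_prodMk_left) hB fun y => hgB (x, y)

variable {r₁ : X → ℝ}

lemma integrable_density_mul_condDensity [SFinite ν] (hr₁ : Measurable r₁)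
    (hr : Measurable (Function.uncurry r))
    (hr₁0 : ∀ x, 0 ≤ r₁ x) (hr0 : ∀ x y, 0 ≤ r x y) (hr₁i : Integrable r₁ μ)
    (hri : ∀ x, Integrable (r x) ν) (hr1 : ∀ x, ∫ y, r x y ∂ν = 1) :
    Integrable (fun z : X × Y => r₁ z.1 * r z.1 z.2) (μ.prod ν) := by
  refine (integrable_prod_iff ((hr₁.comp measurable_fst).mul hr).aestronglyMeasurable).2
    ⟨ae_of_all _ fun x => (hri x).const_mul (r₁ x), ?_⟩
  convert hr₁i using 1
  funext x
  refine (integral_congr_ae (ae_of_all _ fun y =>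
    Real.norm_of_nonneg (mul_nonneg (hr₁0 x) (hr0 x y)))).trans ?_
  rw [integral_const_mul, hr1 x, mul_one]

lemma integral_withDensity_prod_eq_integral_condRisk [SFinite μ] [SFinite ν]
    (hr₁ : Measurable r₁) (hr : Measurable (Function.uncurry r))
    (hr₁0 : ∀ x, 0 ≤ r₁ x) (hr0 : ∀ x y, 0 ≤ r x y) (hr₁i : Integrable r₁ μ)
    (hri : ∀ x, Integrable (r x) ν) (hr1 : ∀ x, ∫ y, r x y ∂ν = 1)
    (hg : Measurable g) (hgB : ∀ z, g z ∈ Icc 0 B) :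
    ∫ z, g z ∂(μ.prod ν).withDensity (fun z => ENNReal.ofReal (r₁ z.1 * r z.1 z.2)) =
      ∫ x, condRisk ν r g x * r₁ x ∂μ := by
  have hdm : Measurable fun z : X × Y => r₁ z.1 * r z.1 z.2 := (hr₁.comp measurable_fst).mul hr
  have hdens := integrable_density_mul_condDensity hr₁ hr hr₁0 hr0 hr₁i hri hr1
  rw [integral_withDensity_ofReal hdm (fun z => mul_nonneg (hr₁0 _) (hr0 _ _)),
    integral_prod _ (hdens.mul_of_mem_Icc hg.aestronglyMeasurable hgB)]
  congr 1 with x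
  simp_rw [condRisk, mul_left_comm _ (r₁ x), integral_const_mul, mul_comm (r₁ x)]

end ConditionalRisk

lemma abs_integral_withDensity_prod_sub_le {X Y : Type*} [MeasurableSpace X]
    [MeasurableSpace Y] {μ : Measure X} {ν : Measure Y} [SFinite μ] [SFinite ν]
    {p₁ q₁ : X → ℝ} {p₂ q₂ : X → Y → ℝ}
    (hp₁ : Measurable p₁) (hq₁ : Measurable q₁)
    (hp₂ : Measurable (Function.uncurry p₂)) (hq₂ : Measurable (Function.uncurry q₂))
    (hp₁0 : ∀ x, 0 ≤ p₁ x) (hq₁0 : ∀ x, 0 ≤ q₁ x)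
    (hp₂0 : ∀ x y, 0 ≤ p₂ x y) (hq₂0 : ∀ x y, 0 ≤ q₂ x y)
    (hp₁i : Integrable p₁ μ) (hq₁i : Integrable q₁ μ)
    (hp₂i : ∀ x, Integrable (p₂ x) ν) (hq₂i : ∀ x, Integrable (q₂ x) ν)
    (hp₁1 : ∫ x, p₁ x ∂μ = 1) (hp₂1 : ∀ x, ∫ y, p₂ x y ∂ν = 1) (hq₂1 : ∀ x, ∫ y, q₂ x y ∂ν = 1)
    {g : X × Y → ℝ} (hg : Measurable g) {B : ℝ} (hB : 0 ≤ B) (hgB : ∀ z, g z ∈ Icc 0 B)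
    {ε₁ ε₂ : ℝ}
    (h₁ : tvDist (μ.withDensity fun x => ENNReal.ofReal (q₁ x))
      (μ.withDensity fun x => ENNReal.ofReal (p₁ x)) ≤ ε₁)
    (h₂ : ∀ x, tvDist (ν.withDensity fun y => ENNReal.ofReal (q₂ x y))
      (ν.withDensity fun y => ENNReal.ofReal (p₂ x y)) ≤ ε₂) :
    |∫ z, g z ∂(μ.prod ν).withDensity (fun z => ENNReal.ofReal (q₁ z.1 * q₂ z.1 z.2)) -
      ∫ z, g z ∂(μ.prod ν).withDensity (fun z => ENNReal.ofReal (p₁ z.1 * p₂ z.1 z.2))| ≤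
      B * ε₁ + B * ε₂ := by
  rw [integral_withDensity_prod_eq_integral_condRisk hq₁ hq₂ hq₁0 hq₂0 hq₁i hq₂i hq₂1 hg hgB,
    integral_withDensity_prod_eq_integral_condRisk hp₁ hp₂ hp₁0 hp₂0 hp₁i hp₂i hp₂1 hg hgB]
  have hGq := condRisk_mem_Icc hq₂0 hq₂i hq₂1 hg hgB
  have hGp := condRisk_mem_Icc hp₂0 hp₂i hp₂1 hg hgB
  have hGqm := (measurable_condRisk (ν := ν) hq₂ hg).aestronglyMeasurable (μ := μ)
  have hGpm := (measurable_condRisk (ν := ν) hp₂ hg).aestronglyMeasurable (μ := μ)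
  have marginal_shift : |∫ x, condRisk ν q₂ g x * q₁ x ∂μ - ∫ x, condRisk ν q₂ g x * p₁ x ∂μ| ≤
      B * ε₁ :=
    (abs_integral_mul_sub_integral_mul_le_mul_tvDist hp₁ hq₁ hp₁0 hq₁0 hp₁i hq₁i
      (measurable_condRisk hq₂ hg) hB hGq).trans (mul_le_mul_of_nonneg_left h₁ hB)
  have conditional_shift :
      |∫ x, condRisk ν q₂ g x * p₁ x ∂μ - ∫ x, condRisk ν p₂ g x * p₁ x ∂μ| ≤ B * ε₂ :=
    abs_integral_mul_sub_integral_mul_le (hp₁i.mul_of_mem_Icc hGqm hGq)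
      (hp₁i.mul_of_mem_Icc hGpm hGp) hp₁0 hp₁i hp₁1 fun x =>
        (abs_condRisk_sub_condRisk_le_mul_tvDist hp₂ hq₂ hp₂0 hq₂0 hp₂i hq₂i hg hB hgB x).trans
          (mul_le_mul_of_nonneg_left (h₂ x) hB)
  exact (abs_sub_le _ _ _).trans (add_le_add marginal_shift conditional_shift)

lemma iSup_le_iSup_add_of_abs_sub_le {ι : Sort*} {u v : ι → ℝ} {δ : ℝ} (hv : ∀ i, 0 ≤ v i)
    (hδ : 0 ≤ δ) (huv : ∀ i, |u i - v i| ≤ δ) : ⨆ i, u i ≤ (⨆ i, v i) + δ := by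
  have h0 : 0 ≤ (⨆ i, v i) + δ := add_nonneg (Real.iSup_nonneg hv) hδ
  by_cases hbdd : BddAbove (range v)
  · exact Real.iSup_le (fun i => by
      linarith [(abs_le.1 (huv i)).2, le_ciSup hbdd i]) h0
  · have hu : ¬BddAbove (range u) := fun ⟨M, hM⟩ => hbdd ⟨M + δ, by
      rintro _ ⟨i, rfl⟩
      linarith [(abs_le.1 (huv i)).1, hM (mem_range_self i)]⟩
    rw [Real.iSup_of_not_bddAbove hu]
    exact h0

lemma le_sqrt_two_mul_self {ε : ℝ} (h0 : 0 ≤ ε) (h1 : ε ≤ 1) : ε ≤ √(2 * ε) :=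
  (Real.le_sqrt h0 (by linarith)).2 (by nlinarith)

theorem generalization_bound_core_general
    {𝒳 𝒴 F : Type*} [MeasurableSpace 𝒳] [MeasurableSpace 𝒴]
    (μ : Measure 𝒳) (ν : Measure 𝒴) [SigmaFinite μ] [SigmaFinite ν]
    (p₁ q₁ : 𝒳 → ℝ) (p₂ q₂ : 𝒳 → 𝒴 → ℝ)
    (𝒟 𝒟hat : Measure (𝒳 × 𝒴))
    (hp₁meas : Measurable p₁) (hq₁meas : Measurable q₁)
    (hp₂meas : Measurable (Function.uncurry p₂)) (hq₂meas : Measurable (Function.uncurry q₂))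
    (hp₁pos : ∀ x, 0 ≤ p₁ x) (hq₁pos : ∀ x, 0 ≤ q₁ x)
    (hp₂pos : ∀ x y, 0 ≤ p₂ x y) (hq₂pos : ∀ x y, 0 ≤ q₂ x y)
    (hp₁int : Integrable p₁ μ) (hq₁int : Integrable q₁ μ)
    (hp₂int : ∀ x, Integrable (p₂ x) ν) (hq₂int : ∀ x, Integrable (q₂ x) ν)
    (hp₁dens : ∫ x, p₁ x ∂μ = 1)
    (hp₂dens : ∀ x, ∫ y, p₂ x y ∂ν = 1) (hq₂dens : ∀ x, ∫ y, q₂ x y ∂ν = 1)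
    (h𝒟 : 𝒟 = (μ.prod ν).withDensity (fun z => ENNReal.ofReal (p₁ z.1 * p₂ z.1 z.2)))
    (h𝒟hat : 𝒟hat = (μ.prod ν).withDensity (fun z => ENNReal.ofReal (q₁ z.1 * q₂ z.1 z.2)))
    (ℓ : F → 𝒳 × 𝒴 → ℝ) (B : ℝ) (hB : 0 ≤ B)
    (hmeas : ∀ f, Measurable (ℓ f))
    (hbound : ∀ f z, ℓ f z ∈ Set.Icc 0 B)
    (Rhat : F → ℝ)
    (A ε₁ ε₂ : ℝ)
    (hε₁0 : 0 ≤ ε₁) (hε₁1 : ε₁ ≤ 1) (hε₂0 : 0 ≤ ε₂) (hε₂1 : ε₂ ≤ 1)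
    (hi : (⨆ f : F, |Rhat f - ∫ z, ℓ f z ∂𝒟hat|) ≤ A)
    (hii : tvDist (μ.withDensity (fun x => ENNReal.ofReal (q₁ x)))
        (μ.withDensity (fun x => ENNReal.ofReal (p₁ x))) ≤ ε₁)
    (hiii : ∀ x, tvDist (ν.withDensity (fun y => ENNReal.ofReal (q₂ x y)))
        (ν.withDensity (fun y => ENNReal.ofReal (p₂ x y))) ≤ ε₂) :
    (⨆ f : F, |Rhat f - ∫ z, ℓ f z ∂𝒟|)
      ≤ A + B * (Real.sqrt (2 * ε₁) + Real.sqrt (2 * ε₂)) := by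
  have hrisk : ∀ f, |∫ z, ℓ f z ∂𝒟hat - ∫ z, ℓ f z ∂𝒟| ≤ B * ε₁ + B * ε₂ := fun f => by
    rw [h𝒟hat, h𝒟]
    exact abs_integral_withDensity_prod_sub_le hp₁meas hq₁meas hp₂meas hq₂meas hp₁pos hq₁pos
      hp₂pos hq₂pos hp₁int hq₁int hp₂int hq₂int hp₁dens hp₂dens hq₂dens (hmeas f) hB
      (hbound f) hii hiii
  calc (⨆ f : F, |Rhat f - ∫ z, ℓ f z ∂𝒟|)
      ≤ (⨆ f : F, |Rhat f - ∫ z, ℓ f z ∂𝒟hat|) + (B * ε₁ + B * ε₂) :=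
        iSup_le_iSup_add_of_abs_sub_le (fun _ => abs_nonneg _) (by positivity) fun f =>
          (abs_abs_sub_abs_le _ _).trans (by rw [sub_sub_sub_cancel_left]; exact hrisk f)
    _ ≤ A + B * (Real.sqrt (2 * ε₁) + Real.sqrt (2 * ε₂)) := by
        rw [mul_add]
        gcongr
        · exact le_sqrt_two_mul_self hε₁0 hε₁1
        · exact le_sqrt_two_mul_self hε₂0 hε₂1

/-- **Deterministic core of the weak-supervision generalization bound (Claim 1).**
Let `𝒟` and `𝒟hat` be probability measures on `𝒳 × 𝒴` with product-conditional form
densities `p(x,y) = p₁(x) p₂(y|x)` and `q(x,y) = q₁(x) q₂(y|x)` with respect to `μ ⊗ ν`,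
let `ℓ` be a loss bounded in `[0, B]`, and `Rhat` any empirical risk functional. If
(i) `sup_f |Rhat f - R_𝒟hat f| ≤ A`, (ii) the feature marginals satisfy
`d_TV(𝒟hat_X, 𝒟_X) ≤ ε₁`, and (iii) the conditionals satisfy
`d_TV(q₂(·|x), p₂(·|x)) ≤ ε₂` for every `x`, then
`sup_f |Rhat f - R_𝒟 f| ≤ A + B (√(2 ε₁) + √(2 ε₂))`. -/
theorem generalization_bound_core
    {𝒳 𝒴 F : Type*} [MeasurableSpace 𝒳] [MeasurableSpace 𝒴]
    (μ : Measure 𝒳) (ν : Measure 𝒴) [SigmaFinite μ] [SigmaFinite ν]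
    (p₁ q₁ : 𝒳 → ℝ) (p₂ q₂ : 𝒳 → 𝒴 → ℝ)
    (𝒟 𝒟hat : Measure (𝒳 × 𝒴))
    (hp₁meas : Measurable p₁) (hq₁meas : Measurable q₁)
    (hp₂meas : Measurable (Function.uncurry p₂)) (hq₂meas : Measurable (Function.uncurry q₂))
    (hp₁pos : ∀ x, 0 ≤ p₁ x) (hq₁pos : ∀ x, 0 ≤ q₁ x)
    (hp₂pos : ∀ x y, 0 ≤ p₂ x y) (hq₂pos : ∀ x y, 0 ≤ q₂ x y)
    (hp₁int : Integrable p₁ μ) (hq₁int : Integrable q₁ μ)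
    (hp₂int : ∀ x, Integrable (p₂ x) ν) (hq₂int : ∀ x, Integrable (q₂ x) ν)
    (hp₁dens : ∫ x, p₁ x ∂μ = 1) (hq₁dens : ∫ x, q₁ x ∂μ = 1)
    (hp₂dens : ∀ x, ∫ y, p₂ x y ∂ν = 1) (hq₂dens : ∀ x, ∫ y, q₂ x y ∂ν = 1)
    (h𝒟 : 𝒟 = (μ.prod ν).withDensity (fun z => ENNReal.ofReal (p₁ z.1 * p₂ z.1 z.2)))
    (h𝒟hat : 𝒟hat = (μ.prod ν).withDensity (fun z => ENNReal.ofReal (q₁ z.1 * q₂ z.1 z.2)))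
    (ℓ : F → 𝒳 × 𝒴 → ℝ) (B : ℝ) (hB : 0 ≤ B)
    (hmeas : ∀ f, Measurable (ℓ f))
    (hbound : ∀ f z, ℓ f z ∈ Set.Icc 0 B)
    (Rhat : F → ℝ)
    (A ε₁ ε₂ : ℝ) (hA : 0 ≤ A)
    (hε₁0 : 0 ≤ ε₁) (hε₁1 : ε₁ ≤ 1) (hε₂0 : 0 ≤ ε₂) (hε₂1 : ε₂ ≤ 1)
    (hi : (⨆ f : F, |Rhat f - ∫ z, ℓ f z ∂𝒟hat|) ≤ A)
    (hii : tvDist (μ.withDensity (fun x => ENNReal.ofReal (q₁ x)))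
        (μ.withDensity (fun x => ENNReal.ofReal (p₁ x))) ≤ ε₁)
    (hiii : ∀ x, tvDist (ν.withDensity (fun y => ENNReal.ofReal (q₂ x y)))
        (ν.withDensity (fun y => ENNReal.ofReal (p₂ x y))) ≤ ε₂) :
    (⨆ f : F, |Rhat f - ∫ z, ℓ f z ∂𝒟|)
      ≤ A + B * (Real.sqrt (2 * ε₁) + Real.sqrt (2 * ε₂)) :=
  generalization_bound_core_general μ ν p₁ q₁ p₂ q₂ 𝒟 𝒟hat hp₁meas hq₁meas hp₂meas hq₂meas hp₁pos
    hq₁pos hp₂pos hq₂pos hp₁int hq₁int hp₂int hq₂int hp₁dens hp₂dens hq₂dens h𝒟 h𝒟hat ℓ B hB hmeas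
    hbound Rhat A ε₁ ε₂ hε₁0 hε₁1 hε₂0 hε₂1 hi hii hiii
end

section
/- Let 𝒳 be a measurable space and P, Q probability measures on 𝒳 × {0, 1}. Let ε_λ ∈ (0, 1/2), let m be a real number with m ≥ log(1/ε_λ) / (2(1/2 − ε_λ)²), and let ε_MV ∈ (0, 1/2) satisfy ε_MV ≤ exp(−2m(1/2 − ε_λ)²). Let C_{ε_MV} = [[1 − ε_MV, ε_MV], [ε_MV, 1 − ε_MV]], and let P̃_MV and Q̃_MV be the channel-corrupted measures defined by P̃_MV(A × {j}) = ∑_{i ∈ {0,1}} (C_{ε_MV})_{i,j} · P(A × {i}) for every measurable A ⊆ 𝒳 and j ∈ {0, 1}, and analogously for Q̃_MV. Then d_TV(P̃_MV, Q̃_MV) ≤ d_TV(P, Q) ≤ (1 − 2·exp(−2m(1/2 − ε_λ)²))^{-1} · d_TV(P̃_MV, Q̃_MV) ≤ (1 − 2ε_λ)^{-1} · d_TV(P̃_MV, Q̃_MV). -/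
/-!
Flipping the label of a pair `(x, i)` is an involution `σ`, and the binary symmetric channel
acts on measurable sets by `P̃ S = (1 - ε) P S + ε P (σ⁻¹ S)`. Hence the signed difference
`d S = P S - Q S` transforms as `d̃ S = (1 - ε) d S + ε d (σ⁻¹ S)`, a convex combination, which
gives the contraction `d_TV(P̃, Q̃) ≤ d_TV(P, Q)`. Applying the same identity to `σ⁻¹ S`
inverts it: `(1 - 2ε) d S = (1 - ε) d̃ S - ε d̃ (σ⁻¹ S)`, so `d_TV(P, Q) ≤ (1 - 2ε)⁻¹ d_TV(P̃, Q̃)`.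
The remaining inequalities only use that `(1 - 2x)⁻¹` increases on `[0, 1/2)` and that the
lower bound on `m` makes the Hoeffding bound `exp (-2m(1/2 - ε_λ)²)` at most `ε_λ`.
-/

open MeasureTheory Matrix

/-- `Ptil` is the label-corrupted version of `P` through the noisy channel with
transition matrix `C`: `Ptil(A × {j}) = ∑ i, C i j * P(A × {i})` for every measurable
`A` and label `j`. -/
def IsChannelCorrupted {𝒳 : Type*} [MeasurableSpace 𝒳] (C : Matrix (Fin 2) (Fin 2) ℝ)
    (P Ptil : Measure (𝒳 × Fin 2)) : Prop :=
  ∀ A : Set 𝒳, MeasurableSet A → ∀ j : Fin 2,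
    Ptil (A ×ˢ ({j} : Set (Fin 2))) =
      ∑ i : Fin 2, ENNReal.ofReal (C i j) * P (A ×ˢ ({i} : Set (Fin 2)))

open Set

lemma abs_one_sub_mul_add_mul_le {ε y z c : ℝ} (hε0 : 0 ≤ ε) (hε1 : ε ≤ 1)
    (hy : |y| ≤ c) (hz : |z| ≤ c) : |(1 - ε) * y + ε * z| ≤ c := by
  rw [abs_le] at *
  constructor <;> nlinarith

lemma exp_neg_mul_le_of_log_one_div_div_le {c m ε : ℝ} (hc : 0 < c) (hε : 0 < ε)
    (hm : Real.log (1 / ε) / c ≤ m) : Real.exp (-(m * c)) ≤ ε := by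
  rw [one_div, Real.log_inv, div_le_iff₀ hc] at hm
  calc Real.exp (-(m * c)) ≤ Real.exp (Real.log ε) := Real.exp_le_exp.mpr (by linarith)
    _ = ε := Real.exp_log hε

section TotalVariation

variable {X : Type*} [MeasurableSpace X] {P Q : Measure X}

lemma tvDist_nonneg (P Q : Measure X) : 0 ≤ tvDist P Q :=
  Real.iSup_nonneg fun _ => abs_nonneg _

lemma abs_measureReal_sub_le_tvDist [IsFiniteMeasure P] [IsFiniteMeasure Q] {A : Set X}
    (hA : MeasurableSet A) : |P.real A - Q.real A| ≤ tvDist P Q := by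
  refine le_ciSup (f := fun A : {A : Set X // MeasurableSet A} => |P.real A.1 - Q.real A.1|)
    ⟨P.real univ + Q.real univ, ?_⟩ ⟨A, hA⟩
  rintro _ ⟨B, rfl⟩
  have hP := measureReal_mono (μ := P) (subset_univ B.1)
  have hQ := measureReal_mono (μ := Q) (subset_univ B.1)
  have := measureReal_nonneg (μ := P) (s := B.1)
  have := measureReal_nonneg (μ := Q) (s := B.1)
  exact abs_sub_le_iff.mpr ⟨by linarith, by linarith⟩

lemma tvDist_le_of_forall {c : ℝ} (h : ∀ A, MeasurableSet A → |P.real A - Q.real A| ≤ c) :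
    tvDist P Q ≤ c :=
  haveI : Nonempty {A : Set X // MeasurableSet A} := ⟨⟨∅, .empty⟩⟩
  ciSup_le fun A => h A.1 A.2

end TotalVariation

section LabelFlip

variable {𝒳 : Type*}

def labelFlip (p : 𝒳 × Fin 2) : 𝒳 × Fin 2 := (p.1, p.2.rev)

lemma labelFlip_involutive : Function.Involutive (labelFlip (𝒳 := 𝒳)) :=
  fun p => by simp [labelFlip]

variable [MeasurableSpace 𝒳]

lemma measurable_labelFlip : Measurable (labelFlip (𝒳 := 𝒳)) :=
  measurable_fst.prodMk ((Measurable.of_discrete (f := Fin.rev)).comp measurable_snd)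

lemma measure_eq_sum_slices {ι : Type*} [Fintype ι] [MeasurableSpace ι]
    [MeasurableSingletonClass ι] (μ : Measure (𝒳 × ι)) {S : Set (𝒳 × ι)}
    (hS : MeasurableSet S) : μ S = ∑ i, μ (((fun x => (x, i)) ⁻¹' S) ×ˢ {i}) := by
  have hS_eq : S = ⋃ i, ((fun x => (x, i)) ⁻¹' S) ×ˢ {i} := by
    ext ⟨x, j⟩
    simp
  calc μ S = μ (⋃ i, ((fun x => (x, i)) ⁻¹' S) ×ˢ {i}) := congrArg μ hS_eq
    _ = ∑ i, μ (((fun x => (x, i)) ⁻¹' S) ×ˢ {i}) := by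
      rw [measure_iUnion, tsum_fintype]
      · intro i j hij
        exact disjoint_left.mpr fun p hi hj => hij ((mem_singleton_iff.mp hi.2).symm.trans hj.2)
      · exact fun i => (measurable_prodMk_right hS).prod (measurableSet_singleton i)

end LabelFlip

abbrev binarySymmetricChannel (ε : ℝ) : Matrix (Fin 2) (Fin 2) ℝ := !![1 - ε, ε; ε, 1 - ε]

namespace IsChannelCorrupted

variable {𝒳 : Type*} [MeasurableSpace 𝒳] {ε : ℝ} {P Q Ptil Qtil : Measure (𝒳 × Fin 2)}

theorem apply_eq (h : IsChannelCorrupted (binarySymmetricChannel ε) P Ptil)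
    {S : Set (𝒳 × Fin 2)} (hS : MeasurableSet S) :
    Ptil S = ENNReal.ofReal (1 - ε) * P S + ENNReal.ofReal ε * P (labelFlip ⁻¹' S) := by
  rw [measure_eq_sum_slices Ptil hS, measure_eq_sum_slices P hS,
    measure_eq_sum_slices P (measurable_labelFlip hS)]
  simp only [Fin.sum_univ_two]
  rw [h _ (measurable_prodMk_right hS), h _ (measurable_prodMk_right hS)]
  simp [labelFlip, preimage_preimage]
  ring

theorem measureReal_eq (h : IsChannelCorrupted (binarySymmetricChannel ε) P Ptil)
    (hε0 : 0 ≤ ε) (hε1 : ε ≤ 1) [IsFiniteMeasure P] {S : Set (𝒳 × Fin 2)}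
    (hS : MeasurableSet S) :
    Ptil.real S = (1 - ε) * P.real S + ε * P.real (labelFlip ⁻¹' S) := by
  rw [measureReal_def, h.apply_eq hS, ENNReal.toReal_add (by finiteness) (by finiteness),
    ENNReal.toReal_mul, ENNReal.toReal_mul, ENNReal.toReal_ofReal hε0,
    ENNReal.toReal_ofReal (sub_nonneg.mpr hε1), measureReal_def, measureReal_def]

theorem isFiniteMeasure (h : IsChannelCorrupted (binarySymmetricChannel ε) P Ptil)
    [IsFiniteMeasure P] : IsFiniteMeasure Ptil :=
  ⟨by rw [h.apply_eq .univ]; finiteness⟩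

variable [IsFiniteMeasure P] [IsFiniteMeasure Q]

theorem measureReal_sub_eq (hP : IsChannelCorrupted (binarySymmetricChannel ε) P Ptil)
    (hQ : IsChannelCorrupted (binarySymmetricChannel ε) Q Qtil) (hε0 : 0 ≤ ε) (hε1 : ε ≤ 1)
    {S : Set (𝒳 × Fin 2)} (hS : MeasurableSet S) :
    Ptil.real S - Qtil.real S = (1 - ε) * (P.real S - Q.real S)
      + ε * (P.real (labelFlip ⁻¹' S) - Q.real (labelFlip ⁻¹' S)) := by
  rw [hP.measureReal_eq hε0 hε1 hS, hQ.measureReal_eq hε0 hε1 hS]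
  ring

theorem tvDist_le (hP : IsChannelCorrupted (binarySymmetricChannel ε) P Ptil)
    (hQ : IsChannelCorrupted (binarySymmetricChannel ε) Q Qtil) (hε0 : 0 ≤ ε) (hε1 : ε ≤ 1) :
    tvDist Ptil Qtil ≤ tvDist P Q :=
  tvDist_le_of_forall fun S hS => by
    rw [hP.measureReal_sub_eq hQ hε0 hε1 hS]
    exact abs_one_sub_mul_add_mul_le hε0 hε1 (abs_measureReal_sub_le_tvDist hS)
      (abs_measureReal_sub_le_tvDist (measurable_labelFlip hS))

theorem tvDist_le_inv_mul (hP : IsChannelCorrupted (binarySymmetricChannel ε) P Ptil)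
    (hQ : IsChannelCorrupted (binarySymmetricChannel ε) Q Qtil) (hε0 : 0 ≤ ε) (hε : ε < 1 / 2) :
    tvDist P Q ≤ (1 - 2 * ε)⁻¹ * tvDist Ptil Qtil := by
  have hε1 : ε ≤ 1 := by linarith
  have := hP.isFiniteMeasure
  have := hQ.isFiniteMeasure
  refine tvDist_le_of_forall fun S hS => (le_inv_mul_iff₀ (by linarith)).mpr ?_
  have hS' := measurable_labelFlip hS
  have hS_diff := hP.measureReal_sub_eq hQ hε0 hε1 hS
  have hS'_diff := hP.measureReal_sub_eq hQ hε0 hε1 hS'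
  rw [labelFlip_involutive.preimage S] at hS'_diff
  have h_inv : (1 - 2 * ε) * (P.real S - Q.real S) = (1 - ε) * (Ptil.real S - Qtil.real S)
      + ε * -(Ptil.real (labelFlip ⁻¹' S) - Qtil.real (labelFlip ⁻¹' S)) := by
    linear_combination ε * hS'_diff - (1 - ε) * hS_diff
  calc (1 - 2 * ε) * |P.real S - Q.real S| ≤ |(1 - 2 * ε) * (P.real S - Q.real S)| := by
        rw [abs_mul]
        exact mul_le_mul_of_nonneg_right (le_abs_self _) (abs_nonneg _)
    _ ≤ tvDist Ptil Qtil := by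
        rw [h_inv]
        exact abs_one_sub_mul_add_mul_le hε0 hε1 (abs_measureReal_sub_le_tvDist hS)
          ((abs_neg _).trans_le (abs_measureReal_sub_le_tvDist hS'))

end IsChannelCorrupted

/-- **Claim (2), total variation version.** Let `εL ∈ (0, 1/2)` be the labeling error of
each of `m ≥ log(1/εL) / (2 (1/2 - εL)²)` labeling functions and let
`εMV ∈ (0, 1/2)` with `εMV ≤ exp(-2 m (1/2 - εL)²)` be the majority-vote labeling error.
If `P̃_MV` and `Q̃_MV` are obtained from probability measures `P` and `Q` on `𝒳 × {0,1}`
by flipping the label with probability `εMV` (channel matrix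
`C = [[1-εMV, εMV], [εMV, 1-εMV]]`), then
`d_TV(P̃_MV, Q̃_MV) ≤ d_TV(P, Q) ≤ (1 - 2 exp(-2 m (1/2 - εL)²))⁻¹ d_TV(P̃_MV, Q̃_MV)
  ≤ (1 - 2 εL)⁻¹ d_TV(P̃_MV, Q̃_MV)`. -/
theorem majority_vote_rcgan_bound
    {𝒳 : Type*} [MeasurableSpace 𝒳]
    (P Q PtilMV QtilMV : Measure (𝒳 × Fin 2))
    [IsProbabilityMeasure P] [IsProbabilityMeasure Q]
    (εL m εMV : ℝ) (hεL0 : 0 < εL) (hεL : εL < 1 / 2)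
    (hm : m ≥ Real.log (1 / εL) / (2 * (1 / 2 - εL) ^ 2))
    (hεMV0 : 0 < εMV) (hεMV : εMV < 1 / 2)
    (hεMVle : εMV ≤ Real.exp (-2 * m * (1 / 2 - εL) ^ 2))
    (hP : IsChannelCorrupted !![1 - εMV, εMV; εMV, 1 - εMV] P PtilMV)
    (hQ : IsChannelCorrupted !![1 - εMV, εMV; εMV, 1 - εMV] Q QtilMV) :
    tvDist PtilMV QtilMV ≤ tvDist P Q ∧
    tvDist P Q
      ≤ (1 - 2 * Real.exp (-2 * m * (1 / 2 - εL) ^ 2))⁻¹ * tvDist PtilMV QtilMV ∧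
    (1 - 2 * Real.exp (-2 * m * (1 / 2 - εL) ^ 2))⁻¹ * tvDist PtilMV QtilMV
      ≤ (1 - 2 * εL)⁻¹ * tvDist PtilMV QtilMV := by
  have h_hoeffding : Real.exp (-2 * m * (1 / 2 - εL) ^ 2) ≤ εL := by
    have h := exp_neg_mul_le_of_log_one_div_div_le
      (mul_pos two_pos (pow_pos (sub_pos.mpr hεL) 2)) hεL0 hm
    rwa [show -(m * (2 * (1 / 2 - εL) ^ 2)) = -2 * m * (1 / 2 - εL) ^ 2 by ring] at h
  have hD := tvDist_nonneg PtilMV QtilMV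
  refine ⟨hP.tvDist_le hQ hεMV0.le (by linarith),
    (hP.tvDist_le_inv_mul hQ hεMV0.le hεMV).trans ?_, ?_⟩
  · gcongr
    linarith
  · gcongr
    linarith
end
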